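/- arXiv:1306.4887 — 2 statements merged into one kernel-verified Lean document; each statement's English description precedes it below -/
import Mathlib

section
/- For every β>0, δ>0, n∈ℕ and x,x'∈ℤ with |x'|≥|x|, one has E_{β,x'}(e^{-δA_n}) ≤ E_{β,x}(e^{-δA_n}); that is, x↦E_{β,x}(e^{-δA_n}) is non-increasing in |x|. -/
open Filter MeasureTheory
open scoped BigOperators Classical

noncomputable section

/-- `c_β = (1+e^{-β/2})/(1-e^{-β/2})`. -/
def cbeta (β : ℝ) : ℝ := (1 + Real.exp (-β / 2)) / (1 - Real.exp (-β / 2))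

/-- law of a single increment: `P_β(v = k) = e^{-(β/2)|k|}/c_β`. -/
def pstep (β : ℝ) (k : ℤ) : ℝ := Real.exp (-(β / 2) * |(k : ℝ)|) / cbeta β

/-- weight (probability) of a finite path of increments. -/
def pathWeight (β : ℝ) {n : ℕ} (v : Fin n → ℤ) : ℝ := ∏ i, pstep β (v i)

/-- position of the walk after `i` steps, `V_i = v_1 + ⋯ + v_i`. -/
def walkAt {n : ℕ} (v : Fin n → ℤ) (i : ℕ) : ℤ :=
  ∑ j ∈ Finset.univ.filter (fun j : Fin n => (j : ℕ) < i), v j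

/-- geometric area `A_n = ∑_{i=1}^n |V_i|`. -/
def areaOf {n : ℕ} (v : Fin n → ℤ) : ℤ := ∑ i ∈ Finset.range n, |walkAt v (i + 1)|

/-- `x ∧̃ y`. -/
def twedge (x y : ℤ) : ℤ := if x * y < 0 then min |x| |y| else 0

/-- extend a configuration `l ∈ ℤ^N` (0-indexed) by `0` beyond `N`. -/
def extendConf {N : ℕ} (l : Fin N → ℤ) : ℕ → ℤ := fun i => if h : i < N then l ⟨i, h⟩ else 0

/-- Hamiltonian `H_{L,β}(l) = β ∑_{n=1}^{N-1} l_n ∧̃ l_{n+1}` (0-indexed `g`). -/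
def HamEn (β : ℝ) (N : ℕ) (g : ℕ → ℤ) : ℝ :=
  β * ∑ n ∈ Finset.range (N - 1), ((twedge (g n) (g (n + 1)) : ℤ) : ℝ)

/-- restricted partition function: sum of `e^{H_{L,β}(l)}` over `l ∈ Ω_L` satisfying `Q`. -/
def Zres (β : ℝ) (L : ℕ) (Q : ℕ → (ℕ → ℤ) → Prop) : ℝ :=
  ∑ N ∈ Finset.Icc 1 L, ∑' l : Fin N → ℤ,
    if (∑ i ∈ Finset.range N, (extendConf l i).natAbs) + N = L ∧ Q N (extendConf l)
    then Real.exp (HamEn β N (extendConf l)) else 0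

/-- uniform-model partition function `Z_{L,β}`. -/
def Zuni (β : ℝ) (L : ℕ) : ℝ := Zres β L (fun _ _ => True)

/-- polymer measure of the event `Q`. -/
def polP (β : ℝ) (L : ℕ) (Q : ℕ → (ℕ → ℤ) → Prop) : ℝ := Zres β L Q / Zuni β L

/-- set of bead-breakpoints of a configuration (`1`-indexed positions `i ∈ [1,N]`
with `l_i ∧̃ l_{i+1} = 0`, convention `l_{N+1}=0`). -/
def breakSet (N : ℕ) (g : ℕ → ℤ) : Finset ℕ :=
  (Finset.Icc 1 N).filter (fun i => twedge (g (i - 1)) (g i) = 0)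

/-- cumulated length `u_j = |l_1|+⋯+|l_j|+j`. -/
def uLen (g : ℕ → ℤ) (j : ℕ) : ℕ := (∑ k ∈ Finset.range j, (g k).natAbs) + j

/-- previous breakpoint before `b` (or `0`). -/
def prevBreak (N : ℕ) (g : ℕ → ℤ) (b : ℕ) : ℕ :=
  ((breakSet N g).filter (fun a => a < b)).sup id

/-- size `|I_{j_max}|` of the largest bead. -/
def maxBead (N : ℕ) (g : ℕ → ℤ) : ℕ :=
  (breakSet N g).sup (fun b => uLen g b - uLen g (prevBreak N g b))

/-- single-bead (one-bead) configurations : `l_i ∧̃ l_{i+1} ≠ 0` for `1 ≤ i ≤ N-1`. -/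
def oneBead (N : ℕ) (g : ℕ → ℤ) : Prop :=
  ∀ i ∈ Finset.Icc 1 (N - 1), twedge (g (i - 1)) (g i) ≠ 0

/-- one-bead partition function `Z^o_{L,β}`. -/
def Zone (β : ℝ) (L : ℕ) : ℝ := Zres β L oneBead

/-- `E_β(e^{-δ A_N} 1_{V_N = 0})`. -/
def EA0 (β δ : ℝ) (N : ℕ) : ℝ :=
  ∑' v : Fin N → ℤ, pathWeight β v * Real.exp (-δ * (areaOf v : ℝ)) *
    (if walkAt v N = 0 then 1 else 0)

/-- `E_β(e^{-δ A_N})`. -/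
def EAfree (β δ : ℝ) (N : ℕ) : ℝ :=
  ∑' v : Fin N → ℤ, pathWeight β v * Real.exp (-δ * (areaOf v : ℝ))

/-- `h_β(δ) := sup_N (1/N) log E_β(e^{-δA_N} 1_{V_N=0})`. -/
def hbeta (β δ : ℝ) : ℝ := ⨆ n : ℕ, Real.log (EA0 β δ (n + 1)) / (n + 1)

/-- `n Y_n = V_0 + V_1 + ⋯ + V_{n-1}`. -/
def ysum {n : ℕ} (v : Fin n → ℤ) : ℤ := ∑ i ∈ Finset.range n, walkAt v i

/-- probability of an event for the first `n` steps of the walk. -/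
def prob0 (β : ℝ) (n : ℕ) (E : (Fin n → ℤ) → Prop) : ℝ :=
  ∑' v : Fin n → ℤ, pathWeight β v * (if E v then 1 else 0)

/-- log-mgf `L(h) = log E_β(e^{h v_1})`. -/
def Lmgf (β : ℝ) (h : ℝ) : ℝ := Real.log (∑' k : ℤ, Real.exp (h * k) * pstep β k)

/-- domain `𝒟`. -/
def Dom (β : ℝ) : Set (ℝ × ℝ) := {p | |p.2| < β / 2 ∧ |p.1 + p.2| < β / 2}

/-- compact domain `K_η`. -/
def Keta (β η : ℝ) : Set (ℝ × ℝ) :=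
  {p | p.2 ∈ Set.Icc (-β / 2 + η) (β / 2 - η) ∧ p.1 + p.2 ∈ Set.Icc (-β / 2 + η) (β / 2 - η)}

/-- `L_Λ(H) = ∫_0^1 L(x h_0 + h_1) dx`. -/
def LA (β : ℝ) (p : ℝ × ℝ) : ℝ := ∫ x in (0:ℝ)..1, Lmgf β (x * p.1 + p.2)

/-- `∇L_Λ`. -/
def gradLA (β : ℝ) (p : ℝ × ℝ) : ℝ × ℝ :=
  (∫ x in (0:ℝ)..1, x * deriv (Lmgf β) (x * p.1 + p.2),
   ∫ x in (0:ℝ)..1, deriv (Lmgf β) (x * p.1 + p.2))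

/-- `L_{Λ_n}(H) = ∑_{i=1}^n L((1-i/n)h_0 + h_1)`. -/
def LAn (β : ℝ) (n : ℕ) (p : ℝ × ℝ) : ℝ :=
  ∑ i ∈ Finset.Icc 1 n, Lmgf β ((1 - (i : ℝ) / n) * p.1 + p.2)

/-- domain `𝒟_n`. -/
def Dn (β : ℝ) (n : ℕ) : Set (ℝ × ℝ) :=
  {p | |p.2| < β / 2 ∧ |(1 - 1 / (n : ℝ)) * p.1 + p.2| < β / 2}

/-- tilted probability `P_{n,H}(E)`. -/
def tiltProb (β : ℝ) (n : ℕ) (H : ℝ × ℝ) (E : (Fin n → ℤ) → Prop) : ℝ :=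
  ∑' v : Fin n → ℤ, pathWeight β v *
    Real.exp (H.1 * ((ysum v : ℝ) / n) + H.2 * (walkAt v n : ℝ) - LAn β n H) *
    (if E v then 1 else 0)

/-- covariance matrix `B(H) = Hess L_Λ(H)`. -/
def Bmat (β : ℝ) (p : ℝ × ℝ) : Matrix (Fin 2) (Fin 2) ℝ :=
  !![∫ x in (0:ℝ)..1, x ^ 2 * deriv (deriv (Lmgf β)) (x * p.1 + p.2),
     ∫ x in (0:ℝ)..1, x * deriv (deriv (Lmgf β)) (x * p.1 + p.2);
     ∫ x in (0:ℝ)..1, x * deriv (deriv (Lmgf β)) (x * p.1 + p.2),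
     ∫ x in (0:ℝ)..1, deriv (deriv (Lmgf β)) (x * p.1 + p.2)]

/-- centered Gaussian density with covariance `B(H)`. -/
def gaussDen (β : ℝ) (p : ℝ × ℝ) (X : Fin 2 → ℝ) : ℝ :=
  (2 * Real.pi * Real.sqrt (Bmat β p).det)⁻¹ *
    Real.exp (-(1 / 2) * dotProduct ((Bmat β p)⁻¹.mulVec X) X)

/-- `G̃(a)`. -/
def Gtil (β : ℝ) (Ht : ℝ × ℝ → ℝ × ℝ) (a : ℝ) : ℝ :=
  a * Real.log (cbeta β * Real.exp (-β)) - (1 / a) * (Ht (1 / a ^ 2, 0)).1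
    + a * LA β (Ht (1 / a ^ 2, 0))

/-- partial sums of stretches `S_i = l_1 + ⋯ + l_i`. -/
def psum (g : ℕ → ℤ) (i : ℕ) : ℤ := ∑ k ∈ Finset.range i, g k

/-- upper envelope `ℰ⁺_{l,i}`. -/
def envUp (N : ℕ) (g : ℕ → ℤ) (i : ℕ) : ℤ :=
  if i = 0 then 0 else if i ≤ N then max (psum g (i - 1)) (psum g i) else psum g N

/-- lower envelope `ℰ⁻_{l,i}`. -/
def envLo (N : ℕ) (g : ℕ → ℤ) (i : ℕ) : ℤ :=
  if i = 0 then 0 else if i ≤ N then min (psum g (i - 1)) (psum g i) else psum g N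

/-- rescaled upper envelope `ℰ̃⁺_l(t)`. -/
def envUpR (N : ℕ) (g : ℕ → ℤ) (t : ℝ) : ℝ := (envUp N g ⌊t * (N + 1)⌋₊ : ℝ) / (N + 1)

/-- rescaled lower envelope `ℰ̃⁻_l(t)`. -/
def envLoR (N : ℕ) (g : ℕ → ℤ) (t : ℝ) : ℝ := (envLo N g ⌊t * (N + 1)⌋₊ : ℝ) / (N + 1)

/-- the Wulff shape `γ*`. -/
def gammaStar (β : ℝ) (Ht : ℝ × ℝ → ℝ × ℝ) (ab : ℝ) (s : ℝ) : ℝ :=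
  ∫ x in (0:ℝ)..s, deriv (Lmgf β) ((1 / 2 - x) * (Ht (1 / ab ^ 2, 0)).1)

/-- standard Brownian motion. -/
def IsStdBrownianMotion {Ω : Type*} [MeasurableSpace Ω] (P : Measure Ω)
    (B : ℝ → Ω → ℝ) : Prop :=
  (∀ ω, B 0 ω = 0) ∧
  (∀ᵐ ω ∂P, Continuous fun t => B t ω) ∧
  (∀ t, Measurable (B t)) ∧
  (∀ s t : ℝ, 0 ≤ s → s ≤ t →
    P.map (fun ω => B t ω - B s ω) = ProbabilityTheory.gaussianReal 0 (Real.toNNReal (t - s))) ∧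
  (∀ (n : ℕ) (t : Fin (n + 1) → ℝ), Monotone t → 0 ≤ t 0 →
    ProbabilityTheory.iIndepFun (m := fun _ : Fin n => Real.measurableSpace)
      (fun i : Fin n => fun ω => B (t i.succ) ω - B (t i.castSucc) ω) P)

end

section AuxMono

lemma myexp_le_one {t : ℝ} (h : t ≤ 0) : Real.exp t ≤ 1 := by
  simpa using Real.exp_le_exp.2 h

/-- Key convolution monotonicity lemma. -/
lemma conv_anti {p g : ℤ → ℝ} (hp0 : ∀ k, 0 ≤ p k) (hps : Summable p)
    (hpm : ∀ a b : ℤ, |a| ≤ |b| → p b ≤ p a)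
    (hg0 : ∀ k, 0 ≤ g k) {C : ℝ} (hgb : ∀ k, g k ≤ C)
    (hgm : ∀ a b : ℤ, |a| ≤ |b| → g b ≤ g a) :
    ∀ x x' : ℤ, |x| ≤ |x'| →
      (∑' k : ℤ, p k * g (x' + k)) ≤ ∑' k : ℤ, p k * g (x + k) := by
  have hC : (0:ℝ) ≤ C := le_trans (hg0 0) (hgb 0)
  set h : ℤ → ℝ := fun x => ∑' k : ℤ, p k * g (x + k) with hh
  have hpe : ∀ k, p (-k) = p k := fun k =>
    le_antisymm (hpm k (-k) (by rw [abs_neg])) (hpm (-k) k (by rw [abs_neg]))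
  have hge : ∀ k, g (-k) = g k := fun k =>
    le_antisymm (hgm k (-k) (by rw [abs_neg])) (hgm (-k) k (by rw [abs_neg]))
  have hpsx : ∀ x : ℤ, Summable (fun j : ℤ => p (j - x)) := by
    intro x
    exact hps.comp_injective (fun a b hab => by simpa using sub_left_injective hab)
  have hsumF : ∀ x : ℤ, Summable (fun j : ℤ => p (j - x) * g j) := by
    intro x
    refine Summable.of_nonneg_of_le (fun j => mul_nonneg (hp0 _) (hg0 _))
      (fun j => mul_le_mul_of_nonneg_left (hgb _) (hp0 _)) ((hpsx x).mul_right C)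
  have hsumG : ∀ x : ℤ, Summable (fun j : ℤ => p (j - x) * g (j + 1)) := by
    intro x
    refine Summable.of_nonneg_of_le (fun j => mul_nonneg (hp0 _) (hg0 _))
      (fun j => mul_le_mul_of_nonneg_left (hgb _) (hp0 _)) ((hpsx x).mul_right C)
  have hx_eq : ∀ x : ℤ, h x = ∑' j : ℤ, p (j - x) * g j := by
    intro x
    rw [hh]
    rw [← (Equiv.addLeft x).tsum_eq (fun j => p (j - x) * g j)]
    apply tsum_congr; intro k
    simp [Equiv.addLeft]
  have hx1_eq : ∀ x : ℤ, h (x + 1) = ∑' j : ℤ, p (j - x) * g (j + 1) := by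
    intro x
    rw [hh]
    rw [← (Equiv.addLeft x).tsum_eq (fun j => p (j - x) * g (j + 1))]
    apply tsum_congr; intro k
    have e1 : x + k - x = k := by ring
    have e2 : x + k + 1 = x + 1 + k := by ring
    simp only [Equiv.coe_addLeft, e1, e2]
  have hstep : ∀ x : ℤ, 0 ≤ x → h (x + 1) ≤ h x := by
    intro x hx
    set D : ℤ → ℝ := fun j => p (j - x) * g j - p (j - x) * g (j + 1) with hD
    have hsumD : Summable D := (hsumF x).sub (hsumG x)
    have hs1 : Summable (fun m : ℕ => D m) :=
      hsumD.comp_injective (fun a b hab => by exact_mod_cast hab)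
    have hs2 : Summable (fun m : ℕ => D (-(m + 1))) :=
      hsumD.comp_injective (fun a b hab => by omega)
    have key : h x - h (x + 1) = ∑' m : ℕ, (D m + D (-(m + 1))) := by
      rw [hx_eq, hx1_eq, ← Summable.tsum_sub (hsumF x) (hsumG x)]
      rw [show (fun j => p (j - x) * g j - p (j - x) * g (j + 1)) = D from rfl]
      rw [tsum_of_nat_of_neg_add_one hs1 hs2, ← Summable.tsum_add hs1 hs2]
    have hterm : ∀ m : ℕ, D m + D (-(m + 1)) =
        (p ((m : ℤ) - x) - p (-((m : ℤ) + 1) - x)) * (g (m : ℤ) - g ((m : ℤ) + 1)) := by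
      intro m
      have e1 : g (-((m : ℤ) + 1)) = g ((m : ℤ) + 1) := hge _
      have e2 : g (-((m : ℤ) + 1) + 1) = g (m : ℤ) := by
        have : -((m : ℤ) + 1) + 1 = -(m : ℤ) := by ring
        rw [this, hge]
      rw [hD]
      simp only []
      rw [e1, e2]
      ring
    have hnn : ∀ m : ℕ, 0 ≤ D m + D (-(m + 1)) := by
      intro m
      rw [hterm m]
      apply mul_nonneg
      · have habs : |(m : ℤ) - x| ≤ |(-((m : ℤ) + 1) - x)| := by
          have h1 : |(-((m : ℤ) + 1) - x)| = (m : ℤ) + 1 + x := by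
            rw [abs_of_nonpos (by push_cast; omega)]; ring
          rw [h1, abs_le]
          constructor <;> [skip; skip] <;> (push_cast; omega)
        linarith [hpm _ _ habs]
      · have habs : |(m : ℤ)| ≤ |(m : ℤ) + 1| := by
          rw [abs_of_nonneg (by positivity), abs_of_nonneg (by positivity)]; omega
        linarith [hgm _ _ habs]
    have : 0 ≤ h x - h (x + 1) := by
      rw [key]; exact tsum_nonneg hnn
    linarith
  have hsymm : ∀ x : ℤ, h (-x) = h x := by
    intro x
    show (∑' k : ℤ, p k * g (-x + k)) = ∑' k : ℤ, p k * g (x + k)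
    rw [← (Equiv.neg ℤ).tsum_eq (fun k => p k * g (-x + k))]
    apply tsum_congr; intro k
    simp only [Equiv.neg_apply]
    rw [hpe]
    congr 1
    rw [show -x + -k = -(x + k) by ring, hge]
  have hmono : ∀ (a : ℤ), 0 ≤ a → ∀ m : ℕ, h (a + m) ≤ h a := by
    intro a ha m
    induction m with
    | zero => simp
    | succ m ih =>
      have h1 : h (a + (m : ℤ) + 1) ≤ h (a + (m : ℤ)) := hstep _ (by positivity)
      calc h (a + ((m : ℕ) + 1 : ℕ)) = h (a + (m : ℤ) + 1) := by push_cast; ring_nf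
        _ ≤ h (a + (m : ℤ)) := h1
        _ ≤ h a := ih
  intro x x' hxx
  have habs : ∀ y : ℤ, h y = h |y| := by
    intro y
    rcases abs_choice y with hy | hy
    · rw [hy]
    · rw [hy, hsymm]
  have hfin : h |x'| ≤ h |x| := by
    have := hmono |x| (abs_nonneg x) ((|x'| - |x|).toNat)
    have he : |x| + (((|x'| - |x|).toNat : ℤ)) = |x'| := by omega
    rwa [he] at this
  calc h x' = h |x'| := habs x'
    _ ≤ h |x| := hfin
    _ = h x := (habs x).symm

end AuxMono

section AuxPath

variable {β δ : ℝ}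

/-- the quantity of interest. -/
noncomputable def Sfun (β δ : ℝ) (n : ℕ) (x : ℤ) : ℝ :=
  ∑' v : Fin n → ℤ, pathWeight β v *
    Real.exp (-δ * (((∑ i ∈ Finset.range n, |x + walkAt v (i + 1)|) : ℤ) : ℝ))

lemma cbeta_pos (hβ : 0 < β) : 0 < cbeta β := by
  have h1 : Real.exp (-β / 2) < 1 := by
    rw [← Real.exp_zero]
    exact Real.exp_lt_exp.2 (by linarith)
  have h0 : 0 < Real.exp (-β / 2) := Real.exp_pos _
  exact div_pos (by linarith) (by linarith)

lemma pstep_nonneg (hβ : 0 < β) (k : ℤ) : 0 ≤ pstep β k :=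
  div_nonneg (Real.exp_nonneg _) (cbeta_pos hβ).le

lemma pstep_anti (hβ : 0 < β) (a b : ℤ) (hab : |a| ≤ |b|) : pstep β b ≤ pstep β a := by
  unfold pstep
  have hR : |(a : ℝ)| ≤ |(b : ℝ)| := by
    rw [← Int.cast_abs, ← Int.cast_abs]
    exact_mod_cast hab
  apply div_le_div_of_nonneg_right _ (cbeta_pos hβ).le
  apply Real.exp_le_exp.2
  nlinarith [abs_nonneg (a : ℝ)]

lemma pstep_summable (hβ : 0 < β) : Summable (pstep β) := by
  have h0 : (0:ℝ) ≤ Real.exp (-(β / 2)) := (Real.exp_pos _).le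
  have h1 : Real.exp (-(β / 2)) < 1 := by
    rw [← Real.exp_zero]; exact Real.exp_lt_exp.2 (by linarith)
  have key : ∀ k : ℤ, pstep β k = (cbeta β)⁻¹ * Real.exp (-(β / 2)) ^ k.natAbs := by
    intro k
    unfold pstep
    rw [div_eq_inv_mul]
    congr 1
    rw [← Real.exp_nat_mul]
    congr 1
    have : |(k : ℝ)| = (k.natAbs : ℝ) := by
      rw [← Int.cast_abs, Int.abs_eq_natAbs, Int.cast_natCast]
    rw [this]; ring
  have hgeo : Summable (fun m : ℕ => Real.exp (-(β / 2)) ^ m) :=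
    summable_geometric_of_lt_one h0 h1
  have : Summable (fun k : ℤ => Real.exp (-(β / 2)) ^ k.natAbs) := by
    apply Summable.of_nat_of_neg_add_one
    · exact hgeo.congr (fun m => by simp)
    · exact (hgeo.mul_right (Real.exp (-(β / 2)))).congr
        (fun m => by
          have : ((-((m : ℤ) + 1)).natAbs) = m + 1 := by omega
          rw [this, pow_succ])
  exact Summable.congr (this.mul_left _) (fun k => (key k).symm)

lemma pathWeight_nonneg (hβ : 0 < β) {n : ℕ} (v : Fin n → ℤ) : 0 ≤ pathWeight β v :=
  Finset.prod_nonneg (fun i _ => pstep_nonneg hβ _)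

lemma pathWeight_cons (hβ : 0 < β) {n : ℕ} (k : ℤ) (v : Fin n → ℤ) :
    pathWeight β (Fin.cons k v) = pstep β k * pathWeight β v := by
  unfold pathWeight
  rw [Fin.prod_univ_succ]
  simp

lemma walkAt_zero {n : ℕ} (v : Fin n → ℤ) : walkAt v 0 = 0 := by
  unfold walkAt
  simp

lemma walkAt_cons {n : ℕ} (k : ℤ) (v : Fin n → ℤ) (i : ℕ) :
    walkAt (Fin.cons k v) (i + 1) = k + walkAt v i := by
  unfold walkAt
  rw [Finset.sum_filter, Finset.sum_filter, Fin.sum_univ_succ]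
  simp only [Fin.cons_zero, Fin.cons_succ, Fin.val_zero, Fin.val_succ]
  rw [if_pos (Nat.succ_pos i)]
  congr 1
  apply Finset.sum_congr rfl
  intro j _
  simp [Nat.succ_lt_succ_iff]

lemma walkAt_neg {n : ℕ} (v : Fin n → ℤ) (i : ℕ) : walkAt (-v) i = -walkAt v i := by
  unfold walkAt
  rw [← Finset.sum_neg_distrib]
  rfl

lemma pathWeight_neg (hβ : 0 < β) {n : ℕ} (v : Fin n → ℤ) :
    pathWeight β (-v) = pathWeight β v := by
  unfold pathWeight
  apply Finset.prod_congr rfl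
  intro i _
  show pstep β (-(v i)) = pstep β (v i)
  unfold pstep
  congr 2
  push_cast
  rw [abs_neg]

lemma pw_summable (hβ : 0 < β) : ∀ n : ℕ, Summable (fun v : Fin n → ℤ => pathWeight β v) := by
  intro n
  induction n with
  | zero =>
    exact Summable.of_finite
  | succ n ih =>
    set e := Fin.consEquiv (fun _ : Fin (n + 1) => ℤ) with he
    rw [← e.summable_iff]
    have : Summable (fun q : ℤ × (Fin n → ℤ) => pstep β q.1 * pathWeight β q.2) :=
      Summable.mul_of_nonneg (pstep_summable hβ) ih (fun k => pstep_nonneg hβ k)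
        (fun v => pathWeight_nonneg hβ v)
    exact this.congr (fun q => (pathWeight_cons hβ q.1 q.2).symm)

lemma Sfun_term_nonneg (hβ : 0 < β) {n : ℕ} (x : ℤ) (v : Fin n → ℤ) :
    0 ≤ pathWeight β v *
      Real.exp (-δ * (((∑ i ∈ Finset.range n, |x + walkAt v (i + 1)|) : ℤ) : ℝ)) :=
  mul_nonneg (pathWeight_nonneg hβ v) (Real.exp_nonneg _)

lemma Sfun_term_le (hβ : 0 < β) (hδ : 0 < δ) {n : ℕ} (x : ℤ) (v : Fin n → ℤ) :
    pathWeight β v *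
      Real.exp (-δ * (((∑ i ∈ Finset.range n, |x + walkAt v (i + 1)|) : ℤ) : ℝ))
      ≤ pathWeight β v := by
  have h1 : Real.exp (-δ * (((∑ i ∈ Finset.range n, |x + walkAt v (i + 1)|) : ℤ) : ℝ)) ≤ 1 := by
    apply myexp_le_one
    have h2 : (0:ℤ) ≤ ∑ i ∈ Finset.range n, |x + walkAt v (i + 1)| :=
      Finset.sum_nonneg (fun i _ => abs_nonneg _)
    have h3 : (0:ℝ) ≤ (((∑ i ∈ Finset.range n, |x + walkAt v (i + 1)|) : ℤ) : ℝ) := by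
      exact_mod_cast h2
    nlinarith
  calc pathWeight β v * _ ≤ pathWeight β v * 1 :=
        mul_le_mul_of_nonneg_left h1 (pathWeight_nonneg hβ v)
    _ = pathWeight β v := mul_one _

lemma Sfun_summable (hβ : 0 < β) (hδ : 0 < δ) (n : ℕ) (x : ℤ) :
    Summable (fun v : Fin n → ℤ => pathWeight β v *
      Real.exp (-δ * (((∑ i ∈ Finset.range n, |x + walkAt v (i + 1)|) : ℤ) : ℝ))) :=
  Summable.of_nonneg_of_le (Sfun_term_nonneg hβ x) (Sfun_term_le hβ hδ x) (pw_summable hβ n)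

lemma Sfun_le (hβ : 0 < β) (hδ : 0 < δ) (n : ℕ) (x : ℤ) :
    Sfun β δ n x ≤ ∑' v : Fin n → ℤ, pathWeight β v :=
  Summable.tsum_le_tsum (Sfun_term_le hβ hδ x) (Sfun_summable hβ hδ n x) (pw_summable hβ n)

lemma Sfun_nonneg (hβ : 0 < β) (n : ℕ) (x : ℤ) : 0 ≤ Sfun β δ n x :=
  tsum_nonneg (Sfun_term_nonneg hβ x)

lemma Sfun_neg (hβ : 0 < β) (n : ℕ) (x : ℤ) : Sfun β δ n (-x) = Sfun β δ n x := by
  unfold Sfun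
  rw [← (Equiv.neg (Fin n → ℤ)).tsum_eq (fun v : Fin n → ℤ => pathWeight β v *
      Real.exp (-δ * (((∑ i ∈ Finset.range n, |(-x) + walkAt v (i + 1)|) : ℤ) : ℝ)))]
  apply tsum_congr
  intro v
  simp only [Equiv.neg_apply]
  rw [pathWeight_neg hβ]
  have hsum : (∑ i ∈ Finset.range n, |(-x) + walkAt (-v) (i + 1)|)
      = ∑ i ∈ Finset.range n, |x + walkAt v (i + 1)| := by
    apply Finset.sum_congr rfl
    intro i _
    rw [walkAt_neg, show -x + -walkAt v (i+1) = -(x + walkAt v (i+1)) by ring, abs_neg]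
  rw [hsum]


lemma Sfun_succ (hβ : 0 < β) (hδ : 0 < δ) (n : ℕ) (x : ℤ) :
    Sfun β δ (n + 1) x = ∑' k : ℤ, pstep β k *
      (Real.exp (-δ * ((|x + k| : ℤ) : ℝ)) * Sfun β δ n (x + k)) := by
  classical
  set F : (Fin (n + 1) → ℤ) → ℝ := fun v => pathWeight β v *
    Real.exp (-δ * (((∑ i ∈ Finset.range (n + 1), |x + walkAt v (i + 1)|) : ℤ) : ℝ)) with hF
  have hterm : ∀ (k : ℤ) (v : Fin n → ℤ), F (Fin.cons k v) =
      (pstep β k * Real.exp (-δ * ((|x + k| : ℤ) : ℝ))) *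
      (pathWeight β v * Real.exp
        (-δ * (((∑ i ∈ Finset.range n, |(x + k) + walkAt v (i + 1)|) : ℤ) : ℝ))) := by
    intro k v
    rw [hF]
    simp only []
    rw [pathWeight_cons hβ]
    have hA : (∑ i ∈ Finset.range (n + 1), |x + walkAt (Fin.cons k v) (i + 1)|)
        = |x + k| + ∑ i ∈ Finset.range n, |(x + k) + walkAt v (i + 1)| := by
      rw [Finset.sum_range_succ']
      have h0 : walkAt (Fin.cons k v) (0 + 1) = k := by
        rw [walkAt_cons, walkAt_zero, add_zero]
      rw [h0, add_comm]
      congr 1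
      apply Finset.sum_congr rfl
      intro i _
      rw [walkAt_cons]
      ring_nf
    rw [hA]
    push_cast
    rw [mul_add, Real.exp_add]
    ring
  set e := Fin.consEquiv (fun _ : Fin (n + 1) => ℤ) with he
  have hcons : ∀ q : ℤ × (Fin n → ℤ), e q = Fin.cons q.1 q.2 := fun q => rfl
  have hfiber : ∀ k : ℤ, Summable (fun v : Fin n → ℤ => F (e (k, v))) := by
    intro k
    refine Summable.congr (((Sfun_summable hβ hδ n (x + k)).mul_left
      (pstep β k * Real.exp (-δ * ((|x + k| : ℤ) : ℝ)))) ) ?_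
    intro v
    rw [hcons, hterm]
  have hsum : Summable (fun q : ℤ × (Fin n → ℤ) => F (e q)) := by
    have hbig : Summable (fun q : ℤ × (Fin n → ℤ) => pstep β q.1 * pathWeight β q.2) :=
      Summable.mul_of_nonneg (pstep_summable hβ) (pw_summable hβ n)
        (fun k => pstep_nonneg hβ k) (fun v => pathWeight_nonneg hβ v)
    refine Summable.of_nonneg_of_le ?_ ?_ hbig
    · intro q
      rw [hcons, hterm]
      apply mul_nonneg
      · exact mul_nonneg (pstep_nonneg hβ _) (Real.exp_nonneg _)
      · exact mul_nonneg (pathWeight_nonneg hβ _) (Real.exp_nonneg _)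
    · intro q
      rw [hcons, hterm]
      have h1 : Real.exp (-δ * ((|x + q.1| : ℤ) : ℝ)) ≤ 1 := by
        apply myexp_le_one
        have : (0:ℝ) ≤ ((|x + q.1| : ℤ) : ℝ) := by exact_mod_cast abs_nonneg (x + q.1)
        nlinarith
      calc (pstep β q.1 * Real.exp (-δ * ((|x + q.1| : ℤ) : ℝ))) *
            (pathWeight β q.2 * Real.exp (-δ *
              (((∑ i ∈ Finset.range n, |(x + q.1) + walkAt q.2 (i + 1)|) : ℤ) : ℝ)))
          ≤ (pstep β q.1 * 1) * pathWeight β q.2 := by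
            apply mul_le_mul
            · exact mul_le_mul_of_nonneg_left h1 (pstep_nonneg hβ _)
            · exact Sfun_term_le hβ hδ _ _
            · exact mul_nonneg (pathWeight_nonneg hβ _) (Real.exp_nonneg _)
            · exact mul_nonneg (pstep_nonneg hβ _) zero_le_one
        _ = pstep β q.1 * pathWeight β q.2 := by ring
  have h1 : Sfun β δ (n + 1) x = ∑' q : ℤ × (Fin n → ℤ), F (e q) := (e.tsum_eq F).symm
  rw [h1, Summable.tsum_prod' hsum hfiber]
  apply tsum_congr
  intro k
  have h2 : (∑' v : Fin n → ℤ, F (e (k, v)))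
      = ∑' v : Fin n → ℤ, (pstep β k * Real.exp (-δ * ((|x + k| : ℤ) : ℝ))) *
        (pathWeight β v * Real.exp
          (-δ * (((∑ i ∈ Finset.range n, |(x + k) + walkAt v (i + 1)|) : ℤ) : ℝ))) :=
    tsum_congr (fun v => by rw [hcons, hterm])
  rw [h2, tsum_mul_left]
  unfold Sfun
  ring

end AuxPath

/-- Monotonicity of `x ↦ E_{β,x}(e^{-δA_n})` in `|x|`. -/
theorem area_laplace_monotone (β δ : ℝ) (hβ : 0 < β) (hδ : 0 < δ) (n : ℕ)
    (x x' : ℤ) (hx : |x| ≤ |x'|) :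
    (∑' v : Fin n → ℤ, pathWeight β v *
        Real.exp (-δ * (((∑ i ∈ Finset.range n, |x' + walkAt v (i + 1)|) : ℤ) : ℝ))) ≤
    (∑' v : Fin n → ℤ, pathWeight β v *
        Real.exp (-δ * (((∑ i ∈ Finset.range n, |x + walkAt v (i + 1)|) : ℤ) : ℝ))) := by
  show Sfun β δ n x' ≤ Sfun β δ n x
  induction n generalizing x x' hx with
  | zero =>
    apply le_of_eq
    unfold Sfun
    simp
  | succ n ih =>
    rw [Sfun_succ hβ hδ, Sfun_succ hβ hδ]
    refine conv_anti (pstep_nonneg hβ) (pstep_summable hβ) (pstep_anti hβ)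
      (g := fun y => Real.exp (-δ * ((|y| : ℤ) : ℝ)) * Sfun β δ n y)
      (fun k => mul_nonneg (Real.exp_nonneg _) (Sfun_nonneg hβ n k))
      (C := ∑' v : Fin n → ℤ, pathWeight β v) ?_ ?_ x x' hx
    · intro k
      calc Real.exp (-δ * ((|k| : ℤ) : ℝ)) * Sfun β δ n k
          ≤ 1 * (∑' v : Fin n → ℤ, pathWeight β v) := by
            apply mul_le_mul
            · apply myexp_le_one
              have : (0:ℝ) ≤ ((|k| : ℤ) : ℝ) := by exact_mod_cast abs_nonneg k
              nlinarith
            · exact Sfun_le hβ hδ n k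
            · exact Sfun_nonneg hβ n k
            · exact zero_le_one
        _ = ∑' v : Fin n → ℤ, pathWeight β v := one_mul _
    · intro a b hab
      apply mul_le_mul
      · apply Real.exp_le_exp.2
        have : ((|a| : ℤ) : ℝ) ≤ ((|b| : ℤ) : ℝ) := by exact_mod_cast hab
        nlinarith
      · exact ih a b hab
      · exact Sfun_nonneg hβ n b
      · exact Real.exp_nonneg _
end

section
/- For every β>0, every L∈ℕ and every L'∈{1,…,L}, (1/2)·Z^o_{L',β}·Z_{L−L',β} ≤ Z_{L,β}(u_{x_1}=L') ≤ Z^o_{L',β}·Z_{L−L',β}, where Z_{L,β}(u_{x_1}=L') denotes the sum of e^{H_{L,β}(l)} over those l∈Ω_L whose first bead has total length u_{x_1}(l)=L', with the convention Z_{0,β}=1. -/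
open Filter MeasureTheory
open scoped BigOperators Classical

/-- total length `u_{x_1}` of the first bead. -/
noncomputable def firstBeadLen (N : ℕ) (g : ℕ → ℤ) : ℕ :=
  uLen g (sInf {i | i ∈ breakSet N g})

/-- partition function with the convention `Z_{0,β} = 1`. -/
noncomputable def Zfull (β : ℝ) (L : ℕ) : ℝ := if L = 0 then 1 else Zuni β L


section FirstBeadHelpers

/-! ### Helper material for the first-bead decomposition -/

lemma fb_extendConf_lt {N : ℕ} (l : Fin N → ℤ) {i : ℕ} (h : i < N) :
    extendConf l i = l ⟨i, h⟩ := dif_pos h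

lemma fb_extendConf_ge {N : ℕ} (l : Fin N → ℤ) {i : ℕ} (h : N ≤ i) :
    extendConf l i = 0 := dif_neg (by omega)

/-- total stretch length `∑ |l_i|`. -/
def fbTot {N : ℕ} (l : Fin N → ℤ) : ℕ := ∑ i, (l i).natAbs

lemma fb_sum_range {N : ℕ} (l : Fin N → ℤ) :
    ∑ i ∈ Finset.range N, (extendConf l i).natAbs = fbTot l := by
  rw [fbTot, ← Fin.sum_univ_eq_sum_range]
  exact Finset.sum_congr rfl fun i _ => by simp [fb_extendConf_lt l i.isLt]

lemma fb_summable {N M : ℕ} (f : (Fin N → ℤ) → ℝ)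
    (hf : ∀ l, f l ≠ 0 → fbTot l ≤ M) : Summable f := by
  apply summable_of_ne_finset_zero
    (s := Fintype.piFinset fun _ : Fin N => Finset.Icc (-(M : ℤ)) M)
  intro l hl
  by_contra h
  apply hl
  rw [Fintype.mem_piFinset]
  intro i
  have h1 : (l i).natAbs ≤ M :=
    le_trans (Finset.single_le_sum (f := fun j => (l j).natAbs)
      (fun j _ => Nat.zero_le _) (Finset.mem_univ i)) (hf l h)
  simp only [Finset.mem_Icc]
  omega

lemma fb_twedge_zero_right (x : ℤ) : twedge x 0 = 0 := by simp [twedge]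

lemma fb_twedge_neg_neg (x y : ℤ) : twedge (-x) (-y) = twedge x y := by
  simp [twedge, neg_mul_neg]

lemma fb_twedge_or (c d : ℤ) : twedge c d = 0 ∨ twedge c (-d) = 0 := by
  unfold twedge
  rcases lt_or_ge (c * d) 0 with h | h
  · right
    rw [if_neg (by rw [mul_neg]; omega)]
  · left
    rw [if_neg (by omega)]

/-- concatenation equivalence. -/
def fbPair (a b : ℕ) : ((Fin a → ℤ) × (Fin b → ℤ)) ≃ (Fin (a + b) → ℤ) where
  toFun p i := if h : (i : ℕ) < a then p.1 ⟨i, h⟩ else p.2 ⟨(i : ℕ) - a, by omega⟩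
  invFun l := (fun i => l ⟨i, by omega⟩, fun j => l ⟨a + j, by omega⟩)
  left_inv p := by
    obtain ⟨p1, p2⟩ := p
    refine Prod.ext (funext fun i => ?_) (funext fun j => ?_)
    · simp [i.isLt]
    · have h : ¬ ((a : ℕ) + (j : ℕ) < a) := by omega
      simp only [h, dif_neg, not_false_iff]
      congr 1
      exact Fin.ext (by simp)
  right_inv l := by
    funext i
    dsimp only
    by_cases h : (i : ℕ) < a
    · rw [dif_pos h]
    · rw [dif_neg h]
      congr 1
      exact Fin.ext (by simp; omega)

lemma fb_extendConf_pair {a b : ℕ} (l1 : Fin a → ℤ) (l2 : Fin b → ℤ) (i : ℕ) :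
    extendConf (fbPair a b (l1, l2)) i =
      if i < a then extendConf l1 i else extendConf l2 (i - a) := by
  unfold extendConf fbPair
  simp only [Equiv.coe_fn_mk]
  by_cases h1 : i < a + b
  · rw [dif_pos h1]
    by_cases h2 : i < a
    · simp [h2]
    · rw [if_neg h2, dif_neg h2, dif_pos (show i - a < b by omega)]
  · rw [dif_neg h1]
    have h2 : ¬ i < a := by omega
    rw [if_neg h2, dif_neg (show ¬ i - a < b by omega)]

lemma fb_tot_pair {a b : ℕ} (l1 : Fin a → ℤ) (l2 : Fin b → ℤ) :
    fbTot (fbPair a b (l1, l2)) = fbTot l1 + fbTot l2 := by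
  rw [← fb_sum_range, ← fb_sum_range, ← fb_sum_range, Finset.sum_range_add]
  congr 1
  · exact Finset.sum_congr rfl fun i hi => by
      rw [fb_extendConf_pair, if_pos (Finset.mem_range.1 hi)]
  · exact Finset.sum_congr rfl fun i hi => by
      rw [fb_extendConf_pair, if_neg (by omega), Nat.add_sub_cancel_left]

lemma fb_ham_pair {a b : ℕ} (ha : 1 ≤ a) (l1 : Fin a → ℤ) (l2 : Fin b → ℤ)
    (hJ : twedge (extendConf l1 (a - 1)) (extendConf l2 0) = 0) (β : ℝ) :
    HamEn β (a + b) (extendConf (fbPair a b (l1, l2))) =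
      HamEn β a (extendConf l1) + HamEn β b (extendConf l2) := by
  set G := extendConf (fbPair a b (l1, l2)) with hG
  have hGi : ∀ i : ℕ, G i = if i < a then extendConf l1 i else extendConf l2 (i - a) :=
    fb_extendConf_pair l1 l2
  unfold HamEn
  rw [← mul_add]
  congr 1
  rcases b with _ | b'
  · have h0 : a + 0 - 1 = a - 1 := by omega
    rw [h0]
    have h1 : (0 : ℕ) - 1 = 0 := by omega
    rw [h1, Finset.sum_range_zero, add_zero]
    refine Finset.sum_congr rfl fun n hn => ?_
    have hn' : n < a - 1 := Finset.mem_range.1 hn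
    rw [hGi n, hGi (n + 1), if_pos (by omega), if_pos (by omega)]
  · have h0 : a + (b' + 1) - 1 = (a - 1) + (b' + 1) := by omega
    rw [h0, Finset.sum_range_add]
    congr 1
    · refine Finset.sum_congr rfl fun n hn => ?_
      have hn' : n < a - 1 := Finset.mem_range.1 hn
      rw [hGi n, hGi (n + 1), if_pos (by omega), if_pos (by omega)]
    · rw [Finset.sum_range_succ']
      have hz : ((twedge (G (a - 1 + 0)) (G (a - 1 + 0 + 1)) : ℤ) : ℝ) = 0 := by
        have e1 : a - 1 + 0 = a - 1 := by omega
        have e2 : a - 1 + 0 + 1 = a := by omega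
        rw [e1, e2, hGi (a - 1), hGi a, if_pos (by omega), if_neg (by omega)]
        simp only [Nat.sub_self]
        rw [hJ]
        norm_num
      rw [hz, add_zero]
      have h2 : b' + 1 - 1 = b' := by omega
      rw [h2]
      refine Finset.sum_congr rfl fun n hn => ?_
      have e1 : a - 1 + (n + 1) = a + n := by omega
      rw [e1, hGi (a + n), hGi (a + n + 1), if_neg (by omega), if_neg (by omega)]
      congr 3 <;> omega

lemma fb_mem_breakSet {N : ℕ} {g : ℕ → ℤ} {i : ℕ} :
    i ∈ breakSet N g ↔ (1 ≤ i ∧ i ≤ N) ∧ twedge (g (i - 1)) (g i) = 0 := by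
  simp [breakSet, Finset.mem_filter, Finset.mem_Icc, and_assoc]

lemma fb_self_mem_breakSet {N : ℕ} (hN : 1 ≤ N) (l : Fin N → ℤ) :
    N ∈ breakSet N (extendConf l) := by
  rw [fb_mem_breakSet]
  exact ⟨⟨hN, le_refl N⟩, by rw [fb_extendConf_ge l (le_refl N), fb_twedge_zero_right]⟩

/-- position of the first breakpoint. -/
noncomputable def fbX1 (N : ℕ) (g : ℕ → ℤ) : ℕ := sInf {i | i ∈ breakSet N g}

lemma fb_firstBeadLen_eq (N : ℕ) (g : ℕ → ℤ) :
    firstBeadLen N g = uLen g (fbX1 N g) := rfl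

lemma fb_x1_mem {N : ℕ} (hN : 1 ≤ N) (l : Fin N → ℤ) :
    fbX1 N (extendConf l) ∈ breakSet N (extendConf l) :=
  Nat.sInf_mem ⟨N, fb_self_mem_breakSet hN l⟩

lemma fb_x1_bounds {N : ℕ} (hN : 1 ≤ N) (l : Fin N → ℤ) :
    1 ≤ fbX1 N (extendConf l) ∧ fbX1 N (extendConf l) ≤ N :=
  (fb_mem_breakSet.1 (fb_x1_mem hN l)).1

lemma fb_x1_pair {a b : ℕ} (ha : 1 ≤ a) (l1 : Fin a → ℤ) (l2 : Fin b → ℤ) :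
    fbX1 (a + b) (extendConf (fbPair a b (l1, l2))) = a ↔
      (oneBead a (extendConf l1) ∧
        twedge (extendConf l1 (a - 1)) (extendConf l2 0) = 0) := by
  set G := extendConf (fbPair a b (l1, l2)) with hGdef
  have hGi : ∀ i : ℕ, G i = if i < a then extendConf l1 i else extendConf l2 (i - a) :=
    fb_extendConf_pair l1 l2
  have hne : {i | i ∈ breakSet (a + b) G}.Nonempty := by
    refine ⟨a + b, ?_⟩
    simp only [Set.mem_setOf_eq]
    exact fb_self_mem_breakSet (by omega) _
  constructor
  · intro h
    have hmem : a ∈ breakSet (a + b) G := by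
      rw [show fbX1 (a + b) G = sInf {i | i ∈ breakSet (a + b) G} from rfl] at h
      have hm := Nat.sInf_mem hne
      rw [h] at hm
      exact hm
    have hJ : twedge (extendConf l1 (a - 1)) (extendConf l2 0) = 0 := by
      have := (fb_mem_breakSet.1 hmem).2
      rwa [hGi (a - 1), hGi a, if_pos (by omega), if_neg (by omega), Nat.sub_self] at this
    refine ⟨?_, hJ⟩
    intro i hi
    rw [Finset.mem_Icc] at hi
    intro hzero
    have hiS : i ∈ breakSet (a + b) G := by
      rw [fb_mem_breakSet]
      refine ⟨⟨hi.1, by omega⟩, ?_⟩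
      rw [hGi (i - 1), hGi i, if_pos (by omega), if_pos (by omega)]
      exact hzero
    have : fbX1 (a + b) G ≤ i := Nat.sInf_le hiS
    omega
  · rintro ⟨hone, hJ⟩
    have hmem : a ∈ breakSet (a + b) G := by
      rw [fb_mem_breakSet]
      refine ⟨⟨ha, by omega⟩, ?_⟩
      rw [hGi (a - 1), hGi a, if_pos (by omega), if_neg (by omega), Nat.sub_self]
      exact hJ
    refine le_antisymm (Nat.sInf_le hmem) ?_
    by_contra hlt
    push_neg at hlt
    have hSmem := Nat.sInf_mem hne
    set x := fbX1 (a + b) G with hx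
    have hxS : x ∈ breakSet (a + b) G := hSmem
    rw [fb_mem_breakSet] at hxS
    have hx1 : 1 ≤ x := hxS.1.1
    have := hone x (Finset.mem_Icc.2 ⟨hx1, by omega⟩)
    apply this
    have := hxS.2
    rwa [hGi (x - 1), hGi x, if_pos (by omega), if_pos (by omega)] at this

lemma fb_uLen_pair {a b : ℕ} (l1 : Fin a → ℤ) (l2 : Fin b → ℤ) :
    uLen (extendConf (fbPair a b (l1, l2))) a = fbTot l1 + a := by
  unfold uLen
  congr 1
  rw [← fb_sum_range]
  exact Finset.sum_congr rfl fun i hi => by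
    rw [fb_extendConf_pair, if_pos (Finset.mem_range.1 hi)]

lemma fb_extendConf_neg {N : ℕ} (l : Fin N → ℤ) (i : ℕ) :
    extendConf (-l) i = -(extendConf l i) := by
  unfold extendConf
  by_cases h : i < N
  · simp [h]
  · simp [h]

lemma fb_tot_neg {N : ℕ} (l : Fin N → ℤ) : fbTot (-l) = fbTot l := by
  unfold fbTot
  exact Finset.sum_congr rfl fun i _ => by simp

lemma fb_ham_neg (β : ℝ) {N : ℕ} (l : Fin N → ℤ) :
    HamEn β N (extendConf (-l)) = HamEn β N (extendConf l) := by
  unfold HamEn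
  congr 1
  refine Finset.sum_congr rfl fun n _ => ?_
  rw [fb_extendConf_neg, fb_extendConf_neg, fb_twedge_neg_neg]

end FirstBeadHelpers


section FirstBeadMain

/-- weight of a one-bead prefix of total length `L'`. -/
noncomputable def fbA (β : ℝ) (Lp a : ℕ) (l1 : Fin a → ℤ) : ℝ :=
  if fbTot l1 + a = Lp ∧ oneBead a (extendConf l1)
  then Real.exp (HamEn β a (extendConf l1)) else 0

/-- weight of a remainder of total length `M`. -/
noncomputable def fbB (β : ℝ) (M b : ℕ) (l2 : Fin b → ℤ) : ℝ :=
  if fbTot l2 + b = M then Real.exp (HamEn β b (extendConf l2)) else 0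

/-- joint weight with the junction constraint. -/
noncomputable def fbJ (β : ℝ) (Lp M a b : ℕ) (l1 : Fin a → ℤ) (l2 : Fin b → ℤ) : ℝ :=
  if twedge (extendConf l1 (a - 1)) (extendConf l2 0) = 0
  then fbA β Lp a l1 * fbB β M b l2 else 0

lemma fbA_nonneg (β : ℝ) (Lp a : ℕ) (l1 : Fin a → ℤ) : 0 ≤ fbA β Lp a l1 := by
  unfold fbA; split_ifs; exacts [(Real.exp_nonneg _), le_rfl]

lemma fbB_nonneg (β : ℝ) (M b : ℕ) (l2 : Fin b → ℤ) : 0 ≤ fbB β M b l2 := by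
  unfold fbB; split_ifs; exacts [(Real.exp_nonneg _), le_rfl]

lemma fbJ_nonneg (β : ℝ) (Lp M a b : ℕ) (l1 : Fin a → ℤ) (l2 : Fin b → ℤ) :
    0 ≤ fbJ β Lp M a b l1 l2 := by
  unfold fbJ; split_ifs
  · exact mul_nonneg (fbA_nonneg _ _ _ _) (fbB_nonneg _ _ _ _)
  · exact le_rfl

lemma fbA_zero {β : ℝ} {Lp a : ℕ} {l1 : Fin a → ℤ} (h : fbTot l1 + a ≠ Lp) :
    fbA β Lp a l1 = 0 := if_neg (fun hc => h hc.1)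

lemma fbB_zero {β : ℝ} {M b : ℕ} {l2 : Fin b → ℤ} (h : fbTot l2 + b ≠ M) :
    fbB β M b l2 = 0 := if_neg h

lemma fbJ_zero1 {β : ℝ} {Lp M a b : ℕ} {l1 : Fin a → ℤ} {l2 : Fin b → ℤ}
    (h : fbTot l1 + a ≠ Lp) : fbJ β Lp M a b l1 l2 = 0 := by
  unfold fbJ; rw [fbA_zero h, zero_mul]; split_ifs <;> rfl

lemma fbJ_zero2 {β : ℝ} {Lp M a b : ℕ} {l1 : Fin a → ℤ} {l2 : Fin b → ℤ}
    (h : fbTot l2 + b ≠ M) : fbJ β Lp M a b l1 l2 = 0 := by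
  unfold fbJ; rw [fbB_zero h, mul_zero]; split_ifs <;> rfl

lemma fbJ_le (β : ℝ) (Lp M a b : ℕ) (l1 : Fin a → ℤ) (l2 : Fin b → ℤ) :
    fbJ β Lp M a b l1 l2 ≤ fbA β Lp a l1 * fbB β M b l2 := by
  unfold fbJ; split_ifs
  · exact le_rfl
  · exact mul_nonneg (fbA_nonneg _ _ _ _) (fbB_nonneg _ _ _ _)

lemma fbB_neg (β : ℝ) (M b : ℕ) (l2 : Fin b → ℤ) : fbB β M b (-l2) = fbB β M b l2 := by
  unfold fbB; rw [fb_tot_neg, fb_ham_neg]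

lemma fbA_summable (β : ℝ) (Lp a : ℕ) : Summable (fbA β Lp a) := by
  refine fb_summable (M := Lp) _ fun l1 h => ?_
  by_contra hb
  exact h (fbA_zero (by omega))

lemma fbB_summable (β : ℝ) (M b : ℕ) : Summable (fbB β M b) := by
  refine fb_summable (M := M) _ fun l2 h => ?_
  by_contra hb
  exact h (fbB_zero (by omega))

lemma fbJ_summable2 (β : ℝ) (Lp M a b : ℕ) (l1 : Fin a → ℤ) :
    Summable (fun l2 => fbJ β Lp M a b l1 l2) := by
  refine fb_summable (M := M) _ fun l2 h => ?_
  by_contra hb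
  exact h (fbJ_zero2 (by omega))

lemma fbJ_tsum1_summable (β : ℝ) (Lp M a b : ℕ) :
    Summable (fun l1 : Fin a → ℤ => ∑' l2 : Fin b → ℤ, fbJ β Lp M a b l1 l2) := by
  refine fb_summable (M := Lp) _ fun l1 h => ?_
  by_contra hb
  apply h
  have : ∀ l2 : Fin b → ℤ, fbJ β Lp M a b l1 l2 = 0 := fun l2 => fbJ_zero1 (by omega)
  rw [tsum_congr this, tsum_zero]

/-- partial quantity: sum over configurations of length `N` whose first breakpoint is `x`. -/
noncomputable def fbH (β : ℝ) (Lf Lp N x : ℕ) : ℝ :=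
  ∑' l : Fin N → ℤ,
    if fbX1 N (extendConf l) = x ∧
        (fbTot l + N = Lf ∧ firstBeadLen N (extendConf l) = Lp)
    then Real.exp (HamEn β N (extendConf l)) else 0

lemma fbH_zero (β : ℝ) (Lf Lp N x : ℕ) (h : Lf < N) : fbH β Lf Lp N x = 0 := by
  unfold fbH
  have hz : ∀ l : Fin N → ℤ,
      (if fbX1 N (extendConf l) = x ∧
          (fbTot l + N = Lf ∧ firstBeadLen N (extendConf l) = Lp)
      then Real.exp (HamEn β N (extendConf l)) else 0) = 0 := by
    intro l
    rw [if_neg]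
    rintro ⟨-, h2, -⟩
    omega
  rw [tsum_congr hz, tsum_zero]

lemma fb_step1 (β : ℝ) (Lf Lp N : ℕ) (hN : 1 ≤ N) :
    (∑' l : Fin N → ℤ,
      if (∑ i ∈ Finset.range N, (extendConf l i).natAbs) + N = Lf ∧
          firstBeadLen N (extendConf l) = Lp
      then Real.exp (HamEn β N (extendConf l)) else 0)
      = ∑ x ∈ Finset.Icc 1 N, fbH β Lf Lp N x := by
  have hpt : ∀ l : Fin N → ℤ,
      (if (∑ i ∈ Finset.range N, (extendConf l i).natAbs) + N = Lf ∧
          firstBeadLen N (extendConf l) = Lp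
      then Real.exp (HamEn β N (extendConf l)) else 0)
        = ∑ x ∈ Finset.Icc 1 N,
          (if fbX1 N (extendConf l) = x ∧
              (fbTot l + N = Lf ∧ firstBeadLen N (extendConf l) = Lp)
          then Real.exp (HamEn β N (extendConf l)) else 0) := by
    intro l
    by_cases hC : fbTot l + N = Lf ∧ firstBeadLen N (extendConf l) = Lp
    · rw [if_pos (by rw [fb_sum_range]; exact hC)]
      have heach : ∀ x ∈ Finset.Icc 1 N,
          (if fbX1 N (extendConf l) = x ∧
              (fbTot l + N = Lf ∧ firstBeadLen N (extendConf l) = Lp)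
          then Real.exp (HamEn β N (extendConf l)) else 0)
            = (if fbX1 N (extendConf l) = x
              then Real.exp (HamEn β N (extendConf l)) else 0) := by
        intro x _
        by_cases hx : fbX1 N (extendConf l) = x
        · rw [if_pos ⟨hx, hC⟩, if_pos hx]
        · rw [if_neg (fun hc => hx hc.1), if_neg hx]
      rw [Finset.sum_congr rfl heach, Finset.sum_ite_eq,
        if_pos (Finset.mem_Icc.2 (fb_x1_bounds hN l))]
    · rw [if_neg (by rw [fb_sum_range]; exact hC)]
      symm
      refine Finset.sum_eq_zero fun x _ => ?_
      exact if_neg (fun hc => hC hc.2)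
  rw [tsum_congr hpt]
  rw [Summable.tsum_finsetSum (fun x _ => fb_summable (M := Lf) _ fun l h => by
    by_contra hb
    apply h
    rw [if_neg]
    rintro ⟨-, h2, -⟩
    omega)]
  rfl

lemma fb_step2 (β : ℝ) (Lf Lp : ℕ) :
    ∑ N ∈ Finset.Icc 1 Lf, ∑ x ∈ Finset.Icc 1 N, fbH β Lf Lp N x
      = ∑ a ∈ Finset.Icc 1 Lf, ∑ b ∈ Finset.range (Lf + 1), fbH β Lf Lp (a + b) a := by
  have h1 : ∀ N ∈ Finset.Icc 1 Lf, ∑ x ∈ Finset.Icc 1 N, fbH β Lf Lp N x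
      = ∑ x ∈ Finset.Icc 1 Lf, if x ≤ N then fbH β Lf Lp N x else 0 := by
    intro N hN
    rw [Finset.mem_Icc] at hN
    rw [← Finset.sum_filter]
    congr 1
    ext x
    simp only [Finset.mem_Icc, Finset.mem_filter]
    omega
  rw [Finset.sum_congr rfl h1, Finset.sum_comm]
  refine Finset.sum_congr rfl fun x hx => ?_
  rw [Finset.mem_Icc] at hx
  rw [← Finset.sum_filter]
  have e1 : (Finset.Icc 1 Lf).filter (fun N => x ≤ N) = Finset.Icc x Lf := by
    ext N
    simp only [Finset.mem_Icc, Finset.mem_filter]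
    omega
  rw [e1]
  have e2 : ∑ N ∈ Finset.Icc x Lf, fbH β Lf Lp N x
      = ∑ b ∈ Finset.range (Lf + 1 - x), fbH β Lf Lp (x + b) x := by
    refine Finset.sum_nbij' (fun N => N - x) (fun b => x + b) ?_ ?_ ?_ ?_ ?_
    · intro N hN
      rw [Finset.mem_Icc] at hN
      rw [Finset.mem_range]
      omega
    · intro b hb
      rw [Finset.mem_range] at hb
      rw [Finset.mem_Icc]
      omega
    · intro N hN
      rw [Finset.mem_Icc] at hN
      omega
    · intro b hb
      omega
    · intro N hN
      rw [Finset.mem_Icc] at hN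
      rw [show x + (N - x) = N by omega]
  rw [e2]
  refine Finset.sum_subset (fun b hb => ?_) (fun b hb hbn => ?_)
  · rw [Finset.mem_range] at *
    omega
  · refine fbH_zero β _ _ _ _ ?_
    rw [Finset.mem_range] at hb hbn
    omega

set_option maxHeartbeats 1600000 in
lemma fb_step3 (β : ℝ) (L Lp : ℕ) (hLpL : Lp ≤ L) {a b : ℕ} (ha : 1 ≤ a) :
    fbH β L Lp (a + b) a
      = ∑' l1 : Fin a → ℤ, ∑' l2 : Fin b → ℤ, fbJ β Lp (L - Lp) a b l1 l2 := by
  unfold fbH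
  have hf : Summable (fun l : Fin (a + b) → ℤ =>
      if fbX1 (a + b) (extendConf l) = a ∧
          (fbTot l + (a + b) = L ∧ firstBeadLen (a + b) (extendConf l) = Lp)
      then Real.exp (HamEn β (a + b) (extendConf l)) else 0) := by
    refine fb_summable (M := L) _ fun l h => ?_
    by_contra hb
    apply h
    rw [if_neg]
    rintro ⟨-, h2, -⟩
    omega
  have hfe : Summable (fun p : (Fin a → ℤ) × (Fin b → ℤ) =>
      if fbX1 (a + b) (extendConf (fbPair a b p)) = a ∧
          (fbTot (fbPair a b p) + (a + b) = L ∧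
            firstBeadLen (a + b) (extendConf (fbPair a b p)) = Lp)
      then Real.exp (HamEn β (a + b) (extendConf (fbPair a b p))) else 0) :=
    (Equiv.summable_iff (fbPair a b)).2 hf
  have hslice : ∀ l1 : Fin a → ℤ, Summable (fun l2 : Fin b → ℤ =>
      if fbX1 (a + b) (extendConf (fbPair a b (l1, l2))) = a ∧
          (fbTot (fbPair a b (l1, l2)) + (a + b) = L ∧
            firstBeadLen (a + b) (extendConf (fbPair a b (l1, l2))) = Lp)
      then Real.exp (HamEn β (a + b) (extendConf (fbPair a b (l1, l2)))) else 0) := by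
    intro l1
    refine fb_summable (M := L) _ fun l2 h => ?_
    by_contra hb
    apply h
    rw [if_neg]
    rintro ⟨-, h2, -⟩
    rw [fb_tot_pair] at h2
    omega
  have hkey : ∀ (l1 : Fin a → ℤ) (l2 : Fin b → ℤ),
      (if fbX1 (a + b) (extendConf (fbPair a b (l1, l2))) = a ∧
          (fbTot (fbPair a b (l1, l2)) + (a + b) = L ∧
            firstBeadLen (a + b) (extendConf (fbPair a b (l1, l2))) = Lp)
      then Real.exp (HamEn β (a + b) (extendConf (fbPair a b (l1, l2)))) else 0)
        = fbJ β Lp (L - Lp) a b l1 l2 := by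
    intro l1 l2
    unfold fbJ fbA fbB
    by_cases hC : fbX1 (a + b) (extendConf (fbPair a b (l1, l2))) = a ∧
        (fbTot (fbPair a b (l1, l2)) + (a + b) = L ∧
          firstBeadLen (a + b) (extendConf (fbPair a b (l1, l2))) = Lp)
    · obtain ⟨hx, htot, hfbl⟩ := hC
      obtain ⟨hone, hJ⟩ := (fb_x1_pair ha l1 l2).1 hx
      have h1 : firstBeadLen (a + b) (extendConf (fbPair a b (l1, l2))) = fbTot l1 + a := by
        rw [fb_firstBeadLen_eq, hx, fb_uLen_pair]
      rw [h1] at hfbl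
      have hB : fbTot l2 + b = L - Lp := by
        rw [fb_tot_pair] at htot
        omega
      rw [if_pos ⟨hx, htot, h1.trans hfbl⟩, if_pos hJ, if_pos ⟨hfbl, hone⟩, if_pos hB,
        fb_ham_pair ha l1 l2 hJ β, Real.exp_add]
    · rw [if_neg hC]
      by_cases hJ : twedge (extendConf l1 (a - 1)) (extendConf l2 0) = 0
      · rw [if_pos hJ]
        by_cases hA : fbTot l1 + a = Lp ∧ oneBead a (extendConf l1)
        · by_cases hB : fbTot l2 + b = L - Lp
          · exfalso
            apply hC
            have hx := (fb_x1_pair ha l1 l2).2 ⟨hA.2, hJ⟩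
            refine ⟨hx, by rw [fb_tot_pair]; omega, ?_⟩
            rw [fb_firstBeadLen_eq, hx, fb_uLen_pair]
            exact hA.1
          · rw [if_neg hB, mul_zero]
        · rw [if_neg hA, zero_mul]
      · rw [if_neg hJ]
  calc (∑' l : Fin (a + b) → ℤ,
      if fbX1 (a + b) (extendConf l) = a ∧
          (fbTot l + (a + b) = L ∧ firstBeadLen (a + b) (extendConf l) = Lp)
      then Real.exp (HamEn β (a + b) (extendConf l)) else 0)
      = ∑' p : (Fin a → ℤ) × (Fin b → ℤ),
          (if fbX1 (a + b) (extendConf (fbPair a b p)) = a ∧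
              (fbTot (fbPair a b p) + (a + b) = L ∧
                firstBeadLen (a + b) (extendConf (fbPair a b p)) = Lp)
          then Real.exp (HamEn β (a + b) (extendConf (fbPair a b p))) else 0) :=
        (Equiv.tsum_eq (fbPair a b) _).symm
    _ = ∑' l1 : Fin a → ℤ, ∑' l2 : Fin b → ℤ,
          (if fbX1 (a + b) (extendConf (fbPair a b (l1, l2))) = a ∧
              (fbTot (fbPair a b (l1, l2)) + (a + b) = L ∧
                firstBeadLen (a + b) (extendConf (fbPair a b (l1, l2))) = Lp)
          then Real.exp (HamEn β (a + b) (extendConf (fbPair a b (l1, l2)))) else 0) :=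
        Summable.tsum_prod' hfe hslice
    _ = ∑' l1 : Fin a → ℤ, ∑' l2 : Fin b → ℤ, fbJ β Lp (L - Lp) a b l1 l2 :=
        tsum_congr fun l1 => tsum_congr fun l2 => hkey l1 l2

/-- the decomposed quantity with junction constraint. -/
noncomputable def fbT (β : ℝ) (L Lp : ℕ) : ℝ :=
  ∑ a ∈ Finset.Icc 1 L, ∑ b ∈ Finset.range (L + 1),
    ∑' l1 : Fin a → ℤ, ∑' l2 : Fin b → ℤ, fbJ β Lp (L - Lp) a b l1 l2

/-- the decomposed quantity without junction constraint. -/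
noncomputable def fbS (β : ℝ) (L Lp : ℕ) : ℝ :=
  ∑ a ∈ Finset.Icc 1 L, ∑ b ∈ Finset.range (L + 1),
    ∑' l1 : Fin a → ℤ, ∑' l2 : Fin b → ℤ, fbA β Lp a l1 * fbB β (L - Lp) b l2

lemma fb_E1 (β : ℝ) (L Lp : ℕ) (hLp : 1 ≤ Lp) (hLpL : Lp ≤ L) :
    Zres β L (fun N g => firstBeadLen N g = Lp) = fbT β L Lp := by
  have h1 : Zres β L (fun N g => firstBeadLen N g = Lp)
      = ∑ N ∈ Finset.Icc 1 L, ∑ x ∈ Finset.Icc 1 N, fbH β L Lp N x := by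
    unfold Zres
    refine Finset.sum_congr rfl fun N hN => ?_
    refine (tsum_congr fun l => ?_).trans (fb_step1 β L Lp N (Finset.mem_Icc.1 hN).1)
    split_ifs with h1 h2 <;>
      first
        | rfl
        | (exact absurd h1 h2)
        | (exact absurd h2 h1)
  rw [h1, fb_step2 β L Lp]
  unfold fbT
  exact Finset.sum_congr rfl fun a hA => Finset.sum_congr rfl fun b hB =>
    fb_step3 β L Lp hLpL (Finset.mem_Icc.1 hA).1

lemma fbTot_fin_zero (l2 : Fin 0 → ℤ) : fbTot l2 = 0 := by simp [fbTot]

lemma fbZoneEq (β : ℝ) (L Lp : ℕ) (hLp : 1 ≤ Lp) (hLpL : Lp ≤ L) :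
    (∑ a ∈ Finset.Icc 1 L, ∑' l1 : Fin a → ℤ, fbA β Lp a l1) = Zone β Lp := by
  have hstep : (∑ a ∈ Finset.Icc 1 L, ∑' l1 : Fin a → ℤ, fbA β Lp a l1)
      = ∑ a ∈ Finset.Icc 1 Lp, ∑' l1 : Fin a → ℤ, fbA β Lp a l1 := by
    symm
    refine Finset.sum_subset (Finset.Icc_subset_Icc_right hLpL) ?_
    intro a hA hAn
    rw [Finset.mem_Icc] at hA hAn
    have hz : ∀ l1 : Fin a → ℤ, fbA β Lp a l1 = 0 := fun l1 => fbA_zero (by omega)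
    rw [tsum_congr hz, tsum_zero]
  rw [hstep]
  unfold Zone Zres
  refine Finset.sum_congr rfl fun a _ => tsum_congr fun l1 => ?_
  unfold fbA
  rw [fb_sum_range]

lemma fbZfullEq (β : ℝ) (L Lp : ℕ) (hL : 1 ≤ L) (hLp : 1 ≤ Lp) (hLpL : Lp ≤ L) :
    (∑ b ∈ Finset.range (L + 1), ∑' l2 : Fin b → ℤ, fbB β (L - Lp) b l2)
      = Zfull β (L - Lp) := by
  by_cases hM : L - Lp = 0
  · rw [hM]
    unfold Zfull
    rw [if_pos rfl]
    rw [Finset.sum_eq_single_of_mem 0 (Finset.mem_range.2 (by omega))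
      (fun b _ hb => by
        have hz : ∀ l2 : Fin b → ℤ, fbB β 0 b l2 = 0 := fun l2 => fbB_zero (by omega)
        rw [tsum_congr hz, tsum_zero])]
    have h1 : ∀ l2 : Fin 0 → ℤ, fbB β 0 0 l2 = 1 := by
      intro l2
      unfold fbB
      rw [if_pos (by rw [fbTot_fin_zero])]
      simp [HamEn]
    rw [tsum_congr h1]
    exact tsum_eq_single (fun i => i.elim0) (fun b' hb' =>
      absurd (Subsingleton.elim b' _) hb')
  · have hstep : (∑ b ∈ Finset.range (L + 1), ∑' l2 : Fin b → ℤ, fbB β (L - Lp) b l2)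
        = ∑ b ∈ Finset.Icc 1 (L - Lp), ∑' l2 : Fin b → ℤ, fbB β (L - Lp) b l2 := by
      symm
      refine Finset.sum_subset (fun b hb => ?_) (fun b hb hbn => ?_)
      · rw [Finset.mem_Icc] at hb
        rw [Finset.mem_range]
        omega
      · rw [Finset.mem_range] at hb
        rw [Finset.mem_Icc] at hbn
        have hz : ∀ l2 : Fin b → ℤ, fbB β (L - Lp) b l2 = 0 := by
          intro l2
          rcases Nat.eq_zero_or_pos b with hb0 | hb1
          · subst hb0
            exact fbB_zero (by rw [fbTot_fin_zero]; omega)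
          · exact fbB_zero (by omega)
        rw [tsum_congr hz, tsum_zero]
    rw [hstep]
    unfold Zfull
    rw [if_neg hM]
    unfold Zuni Zres
    refine Finset.sum_congr rfl fun b _ => tsum_congr fun l2 => ?_
    unfold fbB
    rw [fb_sum_range]
    by_cases h : fbTot l2 + b = L - Lp
    · rw [if_pos h, if_pos (⟨h, trivial⟩ : _ ∧ _)]
    · rw [if_neg h, if_neg (fun hc => h hc.1)]

lemma fb_E2 (β : ℝ) (L Lp : ℕ) (hL : 1 ≤ L) (hLp : 1 ≤ Lp) (hLpL : Lp ≤ L) :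
    fbS β L Lp = Zone β Lp * Zfull β (L - Lp) := by
  unfold fbS
  have hfac : ∀ a ∈ Finset.Icc 1 L, ∀ b ∈ Finset.range (L + 1),
      (∑' l1 : Fin a → ℤ, ∑' l2 : Fin b → ℤ, fbA β Lp a l1 * fbB β (L - Lp) b l2)
        = (∑' l1 : Fin a → ℤ, fbA β Lp a l1) * (∑' l2 : Fin b → ℤ, fbB β (L - Lp) b l2) := by
    intro a _ b _
    have h1 : ∀ l1 : Fin a → ℤ, (∑' l2 : Fin b → ℤ, fbA β Lp a l1 * fbB β (L - Lp) b l2)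
        = fbA β Lp a l1 * ∑' l2 : Fin b → ℤ, fbB β (L - Lp) b l2 :=
      fun l1 => tsum_mul_left
    rw [tsum_congr h1, tsum_mul_right]
  rw [Finset.sum_congr rfl (fun a ha => Finset.sum_congr rfl (hfac a ha))]
  rw [← Finset.sum_mul_sum]
  rw [fbZoneEq β L Lp hLp hLpL, fbZfullEq β L Lp hL hLp hLpL]

lemma fb_E3 (β : ℝ) (L Lp : ℕ) : fbT β L Lp ≤ fbS β L Lp := by
  unfold fbT fbS
  refine Finset.sum_le_sum fun a _ => Finset.sum_le_sum fun b _ => ?_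
  have hAB2 : ∀ l1 : Fin a → ℤ, Summable (fun l2 : Fin b → ℤ =>
      fbA β Lp a l1 * fbB β (L - Lp) b l2) :=
    fun l1 => (fbB_summable β (L - Lp) b).mul_left _
  have hAB1 : Summable (fun l1 : Fin a → ℤ =>
      ∑' l2 : Fin b → ℤ, fbA β Lp a l1 * fbB β (L - Lp) b l2) := by
    have he : (fun l1 : Fin a → ℤ => ∑' l2 : Fin b → ℤ, fbA β Lp a l1 * fbB β (L - Lp) b l2)
        = fun l1 => fbA β Lp a l1 * ∑' l2 : Fin b → ℤ, fbB β (L - Lp) b l2 :=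
      funext fun l1 => tsum_mul_left
    rw [he]
    exact (fbA_summable β Lp a).mul_right _
  refine Summable.tsum_le_tsum (fun l1 => ?_) (fbJ_tsum1_summable β Lp (L - Lp) a b) hAB1
  exact Summable.tsum_le_tsum (fun l2 => fbJ_le β Lp (L - Lp) a b l1 l2)
    (fbJ_summable2 β Lp (L - Lp) a b l1) (hAB2 l1)

lemma fb_E4 (β : ℝ) (L Lp : ℕ) : fbS β L Lp ≤ 2 * fbT β L Lp := by
  unfold fbT fbS
  rw [Finset.mul_sum]
  refine Finset.sum_le_sum fun a _ => ?_
  rw [Finset.mul_sum]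
  refine Finset.sum_le_sum fun b _ => ?_
  have key : ∀ (l1 : Fin a → ℤ) (l2 : Fin b → ℤ),
      fbA β Lp a l1 * fbB β (L - Lp) b l2
        ≤ fbJ β Lp (L - Lp) a b l1 l2 + fbJ β Lp (L - Lp) a b l1 (-l2) := by
    intro l1 l2
    rcases fb_twedge_or (extendConf l1 (a - 1)) (extendConf l2 0) with h | h
    · have h1 : fbJ β Lp (L - Lp) a b l1 l2 = fbA β Lp a l1 * fbB β (L - Lp) b l2 := by
        unfold fbJ; rw [if_pos h]
      rw [h1]
      exact le_add_of_nonneg_right (fbJ_nonneg _ _ _ _ _ _ _)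
    · have h2 : fbJ β Lp (L - Lp) a b l1 (-l2) = fbA β Lp a l1 * fbB β (L - Lp) b l2 := by
        unfold fbJ
        rw [if_pos (by rw [fb_extendConf_neg]; exact h), fbB_neg]
      rw [h2]
      exact le_add_of_nonneg_left (fbJ_nonneg _ _ _ _ _ _ _)
  have hJ2 : ∀ l1 : Fin a → ℤ, Summable (fun l2 : Fin b → ℤ => fbJ β Lp (L - Lp) a b l1 l2) :=
    fbJ_summable2 β Lp (L - Lp) a b
  have hJ2n : ∀ l1 : Fin a → ℤ, Summable (fun l2 : Fin b → ℤ => fbJ β Lp (L - Lp) a b l1 (-l2)) := by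
    intro l1
    have := (Equiv.summable_iff (f := fun l2 : Fin b → ℤ => fbJ β Lp (L - Lp) a b l1 l2)
      (Equiv.neg (Fin b → ℤ))).2 (hJ2 l1)
    exact this
  have inner : ∀ l1 : Fin a → ℤ,
      (∑' l2 : Fin b → ℤ, fbA β Lp a l1 * fbB β (L - Lp) b l2)
        ≤ 2 * ∑' l2 : Fin b → ℤ, fbJ β Lp (L - Lp) a b l1 l2 := by
    intro l1
    have step : (∑' l2 : Fin b → ℤ, fbA β Lp a l1 * fbB β (L - Lp) b l2)
        ≤ ∑' l2 : Fin b → ℤ,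
            (fbJ β Lp (L - Lp) a b l1 l2 + fbJ β Lp (L - Lp) a b l1 (-l2)) := by
      refine Summable.tsum_le_tsum (key l1) ((fbB_summable β (L - Lp) b).mul_left _) ?_
      exact (hJ2 l1).add (hJ2n l1)
    have hsplit : (∑' l2 : Fin b → ℤ,
        (fbJ β Lp (L - Lp) a b l1 l2 + fbJ β Lp (L - Lp) a b l1 (-l2)))
          = (∑' l2 : Fin b → ℤ, fbJ β Lp (L - Lp) a b l1 l2)
            + ∑' l2 : Fin b → ℤ, fbJ β Lp (L - Lp) a b l1 (-l2) :=
      Summable.tsum_add (hJ2 l1) (hJ2n l1)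
    have hneg : (∑' l2 : Fin b → ℤ, fbJ β Lp (L - Lp) a b l1 (-l2))
        = ∑' l2 : Fin b → ℤ, fbJ β Lp (L - Lp) a b l1 l2 :=
      Equiv.tsum_eq (Equiv.neg (Fin b → ℤ)) (fun l2 => fbJ β Lp (L - Lp) a b l1 l2)
    rw [hsplit, hneg] at step
    linarith
  have houter : (∑' l1 : Fin a → ℤ, ∑' l2 : Fin b → ℤ, fbA β Lp a l1 * fbB β (L - Lp) b l2)
      ≤ ∑' l1 : Fin a → ℤ, 2 * ∑' l2 : Fin b → ℤ, fbJ β Lp (L - Lp) a b l1 l2 := by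
    refine Summable.tsum_le_tsum inner ?_ ?_
    · have he : (fun l1 : Fin a → ℤ =>
          ∑' l2 : Fin b → ℤ, fbA β Lp a l1 * fbB β (L - Lp) b l2)
          = fun l1 => fbA β Lp a l1 * ∑' l2 : Fin b → ℤ, fbB β (L - Lp) b l2 :=
        funext fun l1 => tsum_mul_left
      rw [he]
      exact (fbA_summable β Lp a).mul_right _
    · exact (fbJ_tsum1_summable β Lp (L - Lp) a b).mul_left 2
  calc (∑' l1 : Fin a → ℤ, ∑' l2 : Fin b → ℤ, fbA β Lp a l1 * fbB β (L - Lp) b l2)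
      ≤ ∑' l1 : Fin a → ℤ, 2 * ∑' l2 : Fin b → ℤ, fbJ β Lp (L - Lp) a b l1 l2 := houter
    _ = 2 * ∑' l1 : Fin a → ℤ, ∑' l2 : Fin b → ℤ, fbJ β Lp (L - Lp) a b l1 l2 := tsum_mul_left

end FirstBeadMain

/-- Decomposition along the first bead. -/
theorem first_bead_decomposition (β : ℝ) (hβ : 0 < β) (L : ℕ) (hL : 1 ≤ L)
    (L' : ℕ) (hL' : L' ∈ Finset.Icc 1 L) :
    (1/2 : ℝ) * Zone β L' * Zfull β (L - L') ≤
        Zres β L (fun N g => firstBeadLen N g = L') ∧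
      Zres β L (fun N g => firstBeadLen N g = L') ≤ Zone β L' * Zfull β (L - L') := by
  rw [Finset.mem_Icc] at hL'
  have hE1 := fb_E1 β L L' hL'.1 hL'.2
  have hE2 := fb_E2 β L L' hL hL'.1 hL'.2
  have hE3 := fb_E3 β L L'
  have hE4 := fb_E4 β L L'
  have hassoc : (1/2 : ℝ) * Zone β L' * Zfull β (L - L')
      = (1/2 : ℝ) * (Zone β L' * Zfull β (L - L')) := by ring
  constructor
  · rw [hE1, hassoc, ← hE2]
    linarith
  · rw [hE1, ← hE2]
    linarith
end
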